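/- arXiv:1603.01241 — 5 statements merged into one kernel-verified Lean document; each statement's English description precedes it below -/
import Mathlib

section
/- Let N ≥ 1. There exist n ≥ N and a monic polynomial Q(x) = xⁿ + a_{n−1}x^{n−1} + ⋯ + a₀ with real coefficients such that Σ_{i=0}^{n−1} |a_i| < 2, a₀ ≠ 0, and (x−1)^N divides Q(x). -/
open Polynomial

open Finset


-- aux: (1+x)^k ≤ 1 + 2kx  when 2kx ≤ 1, x ≥ 0
lemma aux_pow_le {x : ℝ} (hx : 0 ≤ x) : ∀ k : ℕ, 2*k*x ≤ 1 → (1+x)^k ≤ 1 + 2*k*x := by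
  intro k
  induction k with
  | zero => simp
  | succ k ih =>
    intro h
    have hk : 2*(k:ℝ)*x ≤ 1 := by
      have : (2:ℝ)*k*x ≤ 2*(k+1)*x := by nlinarith
      push_cast at h ⊢; linarith
    have h1 := ih hk
    have h2 : (1+x)^(k+1) = (1+x)^k * (1+x) := by ring
    have hnn : (0:ℝ) ≤ (1+x)^k := by positivity
    calc (1+x)^(k+1) = (1+x)^k * (1+x) := h2
      _ ≤ (1 + 2*k*x) * (1+x) := by nlinarith
      _ ≤ 1 + 2*((k:ℝ)+1)*x := by nlinarith
      _ = 1 + 2*((k+1:ℕ):ℝ)*x := by push_cast; ring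

/-- For any `N ≥ 1` there exist `n ≥ N` and a monic polynomial
`Q(x) = xⁿ + a_{n−1}x^{n−1} + ⋯ + a₀` with `Σ_{i<n} |a_i| < 2`, `a₀ ≠ 0`,
and `(x−1)^N ∣ Q(x)`. -/
theorem stmt_6 (N : ℕ) (hN : 1 ≤ N) :
    ∃ (n : ℕ) (Q : Polynomial ℝ), N ≤ n ∧ Q.Monic ∧ Q.natDegree = n ∧
      (∑ i ∈ Finset.range n, |Q.coeff i|) < 2 ∧ Q.coeff 0 ≠ 0 ∧
      (X - 1) ^ N ∣ Q := by
  obtain ⟨M, rfl⟩ := Nat.exists_eq_succ_of_ne_zero (Nat.one_le_iff_ne_zero.mp hN)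
  set m : ℕ := (M+1)^(M+3) + 2*M + 1 with hm_def
  have hm1 : 1 ≤ m := by omega
  have hm2M : 2*M ≤ m := by omega
  set n : ℕ := M*m + 1 with hn_def
  set v : ℕ → ℝ := fun i => ((i * m : ℕ) : ℝ) with hv_def
  set c : ℕ → ℝ := fun i => ∏ j ∈ (range (M+1)).erase i, ((v i - v j)⁻¹ * ((n:ℝ) - v j)) with hc_def
  -- injectivity of nodes
  have hvmono : ∀ {i j : ℕ}, i < j → v i < v j := by
    intro i j hij
    simp only [hv_def]
    exact_mod_cast (Nat.mul_lt_mul_right hm1).mpr hij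
  have hinj : Set.InjOn v (range (M+1)) := by
    intro a _ b _ hab
    by_contra hne
    rcases Nat.lt_or_ge a b with h | h
    · exact absurd hab (ne_of_lt (hvmono h))
    · exact absurd hab.symm (ne_of_lt (hvmono (lt_of_le_of_ne h (Ne.symm hne))))
  -- node values are < n
  have hvlt : ∀ i ∈ range (M+1), v i < (n:ℝ) := by
    intro i hi
    simp only [mem_range] at hi
    have : i * m < n := by
      have : i * m ≤ M * m := Nat.mul_le_mul_right m (Nat.lt_succ_iff.mp hi)
      omega
    simp only [hv_def]
    exact_mod_cast this
  -- c agrees with evaluation of Lagrange basis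
  have hcbasis : ∀ i, eval (n:ℝ) (Lagrange.basis (range (M+1)) v i) = c i := by
    intro i
    simp only [Lagrange.basis, Lagrange.basisDivisor, eval_prod, eval_mul, eval_C, eval_sub,
      eval_X, hc_def]
  -- Lagrange extrapolation identity
  have hLag : ∀ p : ℝ[X], p.degree < (M+1 : ℕ) →
      eval (n:ℝ) p = ∑ i ∈ range (M+1), c i * eval (v i) p := by
    intro p hp
    have hdeg : p.degree < (#(range (M+1)) : ℕ) := by simpa using hp
    conv_lhs => rw [Lagrange.eq_interpolate hinj hdeg]
    rw [Lagrange.interpolate_apply, eval_finset_sum]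
    refine Finset.sum_congr rfl fun i hi => ?_
    rw [eval_mul, eval_C, hcbasis, mul_comm]
  -- moment identity
  have hmom : ∀ k, k < M+1 →
      ((n.choose k : ℕ) : ℝ) = ∑ i ∈ range (M+1), c i * (((i*m).choose k : ℕ) : ℝ) := by
    intro k hk
    have hdeg : (descPochhammer ℝ k).degree < (M+1 : ℕ) := by
      refine lt_of_le_of_lt degree_le_natDegree ?_
      rw [descPochhammer_natDegree]
      exact_mod_cast hk
    have h := hLag (descPochhammer ℝ k) hdeg
    rw [descPochhammer_eval_eq_descFactorial] at h
    simp only [hv_def, descPochhammer_eval_eq_descFactorial] at h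
    have hfac : ((Nat.factorial k : ℕ) : ℝ) ≠ 0 := by exact_mod_cast (Nat.factorial_ne_zero k)
    apply mul_left_cancel₀ hfac
    rw [Finset.mul_sum]
    calc ((Nat.factorial k : ℕ):ℝ) * (n.choose k : ℕ) = ((n.descFactorial k : ℕ) : ℝ) := by
          rw [Nat.descFactorial_eq_factorial_mul_choose]; push_cast; ring
      _ = ∑ i ∈ range (M+1), c i * ((i*m).descFactorial k : ℕ) := h
      _ = ∑ i ∈ range (M+1), ((Nat.factorial k : ℕ) : ℝ) * (c i * ((i*m).choose k : ℕ)) := by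
          refine Finset.sum_congr rfl fun i _ => ?_
          rw [Nat.descFactorial_eq_factorial_mul_choose]; push_cast; ring

  -- basic node arithmetic
  have hvM : ∀ j, j < M → v M - v j = ((M - j : ℕ) : ℝ) * m ∧ (n:ℝ) - v j = ((M - j : ℕ) : ℝ) * m + 1 := by
    intro j hj
    have hjM : j ≤ M := le_of_lt hj
    constructor
    · simp only [hv_def, hn_def]
      push_cast [Nat.cast_sub hjM]
      ring
    · simp only [hv_def, hn_def]
      push_cast [Nat.cast_sub hjM]
      ring
  -- the polynomial
  set E : ℝ[X] := ∑ i ∈ range (M+1), C (c i) * X ^ (i*m) with hE_def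
  set Q : ℝ[X] := X^n - E with hQ_def
  have htlt : ∀ i ∈ range (M+1), i*m < n := by
    intro i hi
    have : i * m ≤ M * m := Nat.mul_le_mul_right m (Nat.lt_succ_iff.mp (mem_range.mp hi))
    omega
  have hEdeg : E.degree < (n : ℕ) := by
    refine lt_of_le_of_lt (degree_sum_le _ _) ?_
    rw [Finset.sup_lt_iff (by exact_mod_cast WithBot.bot_lt_coe n)]
    intro i hi
    refine lt_of_le_of_lt (degree_C_mul_X_pow_le _ _) ?_
    exact_mod_cast htlt i hi
  have hQmonic : Q.Monic := monic_X_pow_sub hEdeg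
  have hQdeg : Q.natDegree = n := by
    have hd : Q.degree = (n : ℕ) := by
      rw [hQ_def, degree_sub_eq_left_of_degree_lt (by rwa [degree_X_pow]), degree_X_pow]
    exact natDegree_eq_of_degree_eq_some hd
  have hEco : ∀ j, E.coeff j = ∑ i ∈ range (M+1), if j = i*m then c i else 0 := by
    intro j
    rw [hE_def, finset_sum_coeff]
    exact Finset.sum_congr rfl fun i _ => by
      rw [coeff_C_mul, coeff_X_pow, mul_ite, mul_one, mul_zero]
  have hEcoeq : ∀ i ∈ range (M+1), E.coeff (i*m) = c i := by
    intro i hi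
    rw [hEco]
    rw [Finset.sum_eq_single i]
    · exact if_pos rfl
    · intro b _ hbi
      refine if_neg fun h => hbi ?_
      exact Nat.eq_of_mul_eq_mul_right hm1 h.symm
    · intro h; exact absurd hi h
  have hEczero : ∀ j, (∀ i ∈ range (M+1), j ≠ i*m) → E.coeff j = 0 := by
    intro j hj; rw [hEco]; exact Finset.sum_eq_zero fun i hi => if_neg (hj i hi)
  have hQcoeff : ∀ j, j < n → Q.coeff j = - E.coeff j := by
    intro j hj
    rw [hQ_def, coeff_sub, coeff_X_pow, if_neg (Nat.ne_of_lt hj)]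
    ring
  -- c i is nonzero (in particular c 0)
  have hfacpos : ∀ i ∈ range (M+1), ∀ j ∈ (range (M+1)).erase i, (v i - v j)⁻¹ * ((n:ℝ) - v j) ≠ 0 := by
    intro i hi j hj
    obtain ⟨hji, hjmem⟩ := Finset.mem_erase.mp hj
    have h1 : v i - v j ≠ 0 := sub_ne_zero.mpr fun h => hji (hinj (by simpa using hjmem) (by simpa using hi) h.symm)
    have h2 : (n:ℝ) - v j ≠ 0 := ne_of_gt (sub_pos.mpr (hvlt j hjmem))
    exact mul_ne_zero (inv_ne_zero h1) h2
  have hc0 : Q.coeff 0 ≠ 0 := by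
    have h0 : (0:ℕ) ∈ range (M+1) := mem_range.mpr (Nat.succ_pos M)
    have : E.coeff 0 = c 0 := by
      have := hEcoeq 0 h0
      simpa using this
    rw [hQcoeff 0 (by omega), this, neg_ne_zero, hc_def]
    exact Finset.prod_ne_zero_iff.mpr (hfacpos 0 h0)
  -- sum of abs coefficients
  have hsum : ∑ j ∈ range n, |Q.coeff j| = ∑ i ∈ range (M+1), |c i| := by
    have h1 : ∑ j ∈ range n, |Q.coeff j| = ∑ j ∈ range n, |E.coeff j| :=
      Finset.sum_congr rfl fun j hj => by rw [hQcoeff j (mem_range.mp hj), abs_neg]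
    have himg : (range (M+1)).image (fun i => i*m) ⊆ range n := by
      intro j hj
      obtain ⟨i, hi, rfl⟩ := Finset.mem_image.mp hj
      exact mem_range.mpr (htlt i hi)
    have h2 : ∑ j ∈ range n, |E.coeff j| = ∑ j ∈ (range (M+1)).image (fun i => i*m), |E.coeff j| := by
      refine (Finset.sum_subset himg fun j _ hj => ?_).symm
      rw [hEczero j fun i hi h => hj (Finset.mem_image.mpr ⟨i, hi, h.symm⟩), abs_zero]
    have h3 : ∑ j ∈ (range (M+1)).image (fun i => i*m), |E.coeff j| = ∑ i ∈ range (M+1), |E.coeff (i*m)| := by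
      refine Finset.sum_image fun a _ b _ h => Nat.eq_of_mul_eq_mul_right hm1 h
    rw [h1, h2, h3]
    exact Finset.sum_congr rfl fun i hi => by rw [hEcoeq i hi]
  -- the norm estimate
  have hmR : (0:ℝ) < m := by exact_mod_cast hm1
  have hgap : ∀ i j : ℕ, i ≠ j → (m:ℝ) ≤ |v i - v j| := by
    intro i j hij
    have key : ∀ a b : ℕ, a < b → (m:ℝ) ≤ |v a - v b| := by
      intro a b hab
      have he : v b - v a = ((b - a : ℕ) : ℝ) * m := by
        simp only [hv_def]
        push_cast [Nat.cast_sub (le_of_lt hab)]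
        ring
      have hpos : 0 < v b - v a := sub_pos.mpr (hvmono hab)
      rw [abs_sub_comm, abs_of_pos hpos, he]
      have h1 : (1:ℝ) ≤ ((b - a : ℕ):ℝ) := by exact_mod_cast (by omega : 1 ≤ b - a)
      nlinarith
    rcases Nat.lt_or_ge i j with h | h
    · exact key i j h
    · rw [abs_sub_comm]
      exact key j i (lt_of_le_of_ne h (Ne.symm hij))
  have hbound : ∑ i ∈ range (M+1), |c i| < 2 := by
    rw [Finset.sum_range_succ]
    -- top weight
    have herase : (range (M+1)).erase M = range M := by
      rw [Finset.range_add_one, Finset.erase_insert Finset.notMem_range_self]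
    have htopfac : ∀ j ∈ range M, (0:ℝ) ≤ (v M - v j)⁻¹ * ((n:ℝ) - v j) ∧
        (v M - v j)⁻¹ * ((n:ℝ) - v j) ≤ 1 + 1/m := by
      intro j hj
      have hjM := mem_range.mp hj
      obtain ⟨e1, e2⟩ := hvM j hjM
      have hd1 : (1:ℝ) ≤ ((M - j : ℕ) : ℝ) := by exact_mod_cast Nat.one_le_iff_ne_zero.mpr (by omega)
      have hdm : (0:ℝ) < ((M - j : ℕ) : ℝ) * m := by positivity
      have hmdm : (m:ℝ) ≤ ((M - j : ℕ) : ℝ) * m := by nlinarith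
      rw [e1, e2]
      constructor
      · positivity
      · rw [inv_mul_eq_div, div_le_iff₀ hdm]
        have : (1:ℝ)/m * (((M - j : ℕ) : ℝ) * m) = ((M - j : ℕ) : ℝ) := by
          field_simp
        nlinarith
    have htop : |c M| ≤ 1 + 2*M/m := by
      have hcM : c M = ∏ j ∈ range M, (v M - v j)⁻¹ * ((n:ℝ) - v j) := by
        simp only [hc_def]; rw [herase]
      have hnn : 0 ≤ c M := by
        rw [hcM]; exact Finset.prod_nonneg fun j hj => (htopfac j hj).1
      rw [abs_of_nonneg hnn, hcM]
      calc ∏ j ∈ range M, (v M - v j)⁻¹ * ((n:ℝ) - v j)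
          ≤ ∏ j ∈ range M, (1 + 1/(m:ℝ)) :=
            Finset.prod_le_prod (fun j hj => (htopfac j hj).1) (fun j hj => (htopfac j hj).2)
        _ = (1 + 1/(m:ℝ))^M := by rw [Finset.prod_const, Finset.card_range]
        _ ≤ 1 + 2*M*(1/m) := by
            refine aux_pow_le (by positivity) M ?_
            rw [mul_one_div, div_le_one hmR]
            exact_mod_cast hm2M
        _ = 1 + 2*M/m := by ring
    -- small weights
    have hsmall : ∀ i ∈ range M, |c i| ≤ (M+1:ℝ)^(M+1) * (m:ℝ)⁻¹ := by
      intro i hi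
      have hiM := mem_range.mp hi
      have hMmem : M ∈ (range (M+1)).erase i :=
        Finset.mem_erase.mpr ⟨Nat.ne_of_gt hiM, Finset.self_mem_range_succ M⟩
      have habs : |c i| = ∏ j ∈ (range (M+1)).erase i, |(v i - v j)⁻¹ * ((n:ℝ) - v j)| := by
        simp only [hc_def]; exact Finset.abs_prod _ _
      rw [habs, ← Finset.mul_prod_erase _ _ hMmem]
      -- factor at M
      have hfM : |(v i - v M)⁻¹ * ((n:ℝ) - v M)| ≤ (m:ℝ)⁻¹ := by
        obtain ⟨e1, e2⟩ := hvM i hiM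
        have he1 : v i - v M = -(((M - i : ℕ) : ℝ) * m) := by linarith
        have he2 : (n:ℝ) - v M = 1 := by linarith
        have hd1 : (1:ℝ) ≤ ((M - i : ℕ) : ℝ) := by exact_mod_cast Nat.one_le_iff_ne_zero.mpr (by omega)
        have hdm : (0:ℝ) < ((M - i : ℕ) : ℝ) * m := by positivity
        rw [he1, he2, mul_one, abs_inv, abs_neg, abs_of_pos hdm]
        refine inv_anti₀ hmR ?_
        nlinarith
      -- other factors
      have hfo : ∀ j ∈ ((range (M+1)).erase i).erase M, |(v i - v j)⁻¹ * ((n:ℝ) - v j)| ≤ (M+1:ℝ) := by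
        intro j hj
        obtain ⟨hjM, hj2⟩ := Finset.mem_erase.mp hj
        obtain ⟨hji, hjmem⟩ := Finset.mem_erase.mp hj2
        have hjlt := mem_range.mp hjmem
        -- |v i - v j| ≥ m
        have hvij : (m:ℝ) ≤ |v i - v j| := hgap i j (Ne.symm hji)
        have hnvj0 : (0:ℝ) < (n:ℝ) - v j := sub_pos.mpr (hvlt j hjmem)
        have hnvj : (n:ℝ) - v j ≤ (M+1:ℝ) * m := by
          have : (0:ℝ) ≤ v j := by simp only [hv_def]; positivity
          have hnle : (n:ℝ) ≤ (M+1:ℝ) * m := by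
            have : (n:ℕ) ≤ (M+1) * m := by
              simp only [hn_def]; nlinarith [hm1]
            exact_mod_cast this
          linarith
        rw [abs_mul, abs_inv]
        have habs0 : (0:ℝ) < |v i - v j| := lt_of_lt_of_le hmR hvij
        rw [abs_of_pos hnvj0]
        calc |v i - v j|⁻¹ * ((n:ℝ) - v j) ≤ (m:ℝ)⁻¹ * ((M+1:ℝ) * m) := by
              exact mul_le_mul (inv_anti₀ hmR hvij) hnvj (le_of_lt hnvj0) (by positivity)
          _ = (M+1:ℝ) := by field_simp
        -- end
      have hprodo : ∏ j ∈ ((range (M+1)).erase i).erase M, |(v i - v j)⁻¹ * ((n:ℝ) - v j)| ≤ (M+1:ℝ)^(M+1) := by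
        calc ∏ j ∈ ((range (M+1)).erase i).erase M, |(v i - v j)⁻¹ * ((n:ℝ) - v j)|
            ≤ ∏ _j ∈ ((range (M+1)).erase i).erase M, (M+1:ℝ) :=
              Finset.prod_le_prod (fun j _ => abs_nonneg _) hfo
          _ = (M+1:ℝ) ^ #(((range (M+1)).erase i).erase M) := Finset.prod_const _
          _ ≤ (M+1:ℝ)^(M+1) := by
              refine pow_le_pow_right₀ (by norm_num) ?_
              calc #(((range (M+1)).erase i).erase M) ≤ #((range (M+1)).erase i) := Finset.card_erase_le
                _ ≤ #(range (M+1)) := Finset.card_erase_le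
                _ = M+1 := Finset.card_range _
      calc |(v i - v M)⁻¹ * ((n:ℝ) - v M)| * ∏ j ∈ ((range (M+1)).erase i).erase M, |(v i - v j)⁻¹ * ((n:ℝ) - v j)|
          ≤ (m:ℝ)⁻¹ * (M+1:ℝ)^(M+1) := by
            exact mul_le_mul hfM hprodo (Finset.prod_nonneg fun j _ => abs_nonneg _) (by positivity)
        _ = (M+1:ℝ)^(M+1) * (m:ℝ)⁻¹ := by ring
    have hsumsmall : ∑ i ∈ range M, |c i| ≤ M * ((M+1:ℝ)^(M+1) * (m:ℝ)⁻¹) := by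
      calc ∑ i ∈ range M, |c i| ≤ ∑ _i ∈ range M, (M+1:ℝ)^(M+1) * (m:ℝ)⁻¹ :=
            Finset.sum_le_sum hsmall
        _ = M * ((M+1:ℝ)^(M+1) * (m:ℝ)⁻¹) := by rw [Finset.sum_const, Finset.card_range]; ring
    -- combine
    have hmbig : (M:ℝ) * (M+1:ℝ)^(M+1) + 2*M < (m:ℝ) := by
      have h1 : M * (M+1)^(M+1) + 2*M < m := by
        have : M * (M+1)^(M+1) ≤ (M+1)^(M+3) := by
          calc M * (M+1)^(M+1) ≤ (M+1)^2 * (M+1)^(M+1) :=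
                Nat.mul_le_mul (by nlinarith) (le_refl _)
            _ = (M+1)^(M+3) := by ring
        omega
      calc (M:ℝ) * (M+1:ℝ)^(M+1) + 2*M = ((M * (M+1)^(M+1) + 2*M : ℕ) : ℝ) := by push_cast; ring
        _ < (m:ℝ) := by exact_mod_cast h1
    calc ∑ i ∈ range M, |c i| + |c M| ≤ M * ((M+1:ℝ)^(M+1) * (m:ℝ)⁻¹) + (1 + 2*M/m) := by
          exact add_le_add hsumsmall htop
      _ = ((M:ℝ) * (M+1:ℝ)^(M+1))/m + (2*M)/m + 1 := by
          rw [div_eq_mul_inv, div_eq_mul_inv]; ring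
      _ = ((M:ℝ) * (M+1:ℝ)^(M+1) + 2*M)/m + 1 := by rw [← add_div]
      _ < 1 + 1 := by
          have h2 := (div_lt_one hmR).mpr hmbig
          linarith
      _ = 2 := by norm_num
  -- divisibility by (X-1)^(M+1)
  have hcomp : Q.comp (X + 1) = (X+1)^n - ∑ i ∈ range (M+1), C (c i) * (X+1)^(i*m) := by
    rw [hQ_def, hE_def, sub_comp, pow_comp, X_comp, Polynomial.sum_comp]
    congr 1
    exact Finset.sum_congr rfl fun i _ => by rw [mul_comp, C_comp, pow_comp, X_comp]
  have hcz : ∀ k, k < M+1 → (Q.comp (X + 1)).coeff k = 0 := by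
    intro k hk
    rw [hcomp, coeff_sub, finset_sum_coeff]
    simp only [coeff_C_mul, coeff_X_add_one_pow]
    rw [sub_eq_zero]
    exact hmom k hk
  obtain ⟨R, hR⟩ := (X_pow_dvd_iff).mpr hcz
  have hQeq : Q = (X - 1 : ℝ[X])^(M+1) * R.comp (X - 1) := by
    have h1 : Q = (Q.comp (X + 1)).comp (X - 1) := by
      rw [comp_assoc]
      have : (X + 1 : ℝ[X]).comp (X - 1) = X := by
        rw [add_comp, X_comp, one_comp]; ring
      rw [this, comp_X]
    rw [h1, hR, mul_comp, pow_comp, X_comp]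
  have hNn : M + 1 ≤ n := by
    have : M ≤ M * m := Nat.le_mul_of_pos_right M (by omega)
    omega
  exact ⟨n, Q, hNn, hQmonic, hQdeg, by rw [hsum]; exact hbound, hc0,
    ⟨R.comp (X - 1), hQeq⟩⟩
end

section
/- Fix n ≥ 1, real numbers b₀,…,bₙ with b₀ ≠ 0, bₙ = 1, and Σ_{j=0}^{n−1} |b_j| < 2. Then there exists η > 1 such that η^n · Σ_{j=0}^{n−1} |b_j| < η + 1, and with Δ := (−η^n, η^n) × (−η^{n−1}, η^{n−1}) × ⋯ × (−η, η) ⊂ ℝⁿ, for every (u_{−n},…,u_{−1}) ∈ Closure(Δ) there exist u₀ ∈ (−η, η) and δ ∈ {−1, +1} with u₀ = δ − Σ_{j=0}^{n−1} b_j u_{j−n}, and moreover (u_{−n+1},…,u_{−1},u₀) ∈ Δ. -/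
/-- Combinatorial core of the covering property proof: for `b₀,…,bₙ` with `b₀ ≠ 0`,
`bₙ = 1`, `Σ_{j<n}|b_j| < 2`, there is `η > 1` with `ηⁿ Σ_{j<n}|b_j| < η + 1` such that
every point of the closure of the box `Δ = ∏_i (−η^{n−i}, η^{n−i})` can be extended:
there are `u₀ ∈ (−η,η)` and `δ ∈ {−1,1}` with `u₀ = δ − Σ_{j<n} b_j u_{j−n}` and the
shifted vector `(u_{−n+1},…,u_{−1},u₀)` lies in `Δ`. -/
theorem stmt_7 (n : ℕ) (hn : 1 ≤ n) (b : ℕ → ℝ) (hb0 : b 0 ≠ 0) (hbn : b n = 1)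
    (hsum : (∑ j ∈ Finset.range n, |b j|) < 2) :
    ∃ η : ℝ, 1 < η ∧ η ^ n * (∑ j ∈ Finset.range n, |b j|) < η + 1 ∧
      ∀ u ∈ closure {v : Fin n → ℝ | ∀ i, |v i| < η ^ (n - (i : ℕ))},
        ∃ u₀ ∈ Set.Ioo (-η) η, ∃ δ ∈ ({-1, 1} : Set ℝ),
          u₀ = δ - ∑ j : Fin n, b j * u j ∧
          (fun i : Fin n => if h : (i : ℕ) + 1 < n then u ⟨(i : ℕ) + 1, h⟩ else u₀)
            ∈ {v : Fin n → ℝ | ∀ i, |v i| < η ^ (n - (i : ℕ))} := by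
  set S := ∑ j ∈ Finset.range n, |b j| with hSdef
  have hS0 : 0 < S := by
    have h0 : 0 < |b 0| := abs_pos.mpr hb0
    have hle : |b 0| ≤ S :=
      Finset.single_le_sum (fun j _ => abs_nonneg (b j))
        (Finset.mem_range.mpr (by omega))
    linarith
  have h2S : 1 < 2 / S := (one_lt_div hS0).mpr hsum
  set η : ℝ := (2 / S) ^ ((n : ℝ)⁻¹) with hηdef
  have hη1 : 1 < η := by
    rw [hηdef]
    apply Real.one_lt_rpow_iff_of_pos (by positivity) |>.mpr
    left
    exact ⟨h2S, by positivity⟩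
  have hηn : η ^ n = 2 / S := Real.rpow_inv_natCast_pow (by positivity) (by omega)
  have hkey : η ^ n * S = 2 := by
    rw [hηn]; field_simp
  have h2lt : (2 : ℝ) < η + 1 := by linarith
  refine ⟨η, hη1, by rw [hkey]; exact h2lt, ?_⟩
  intro u hu
  -- closure is contained in the closed box
  have hC : IsClosed {v : Fin n → ℝ | ∀ i, |v i| ≤ η ^ (n - (i : ℕ))} := by
    have : {v : Fin n → ℝ | ∀ i, |v i| ≤ η ^ (n - (i : ℕ))}
        = ⋂ i, {v : Fin n → ℝ | |v i| ≤ η ^ (n - (i : ℕ))} := by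
      ext v; simp [Set.mem_iInter]
    rw [this]
    exact isClosed_iInter fun i =>
      isClosed_le ((continuous_apply i).abs) continuous_const
  have hu' : ∀ i : Fin n, |u i| ≤ η ^ (n - (i : ℕ)) := by
    have := closure_minimal (by intro v hv i; exact (hv i).le) hC hu
    exact this
  set x := ∑ j : Fin n, b j * u j with hxdef
  have hxabs : |x| ≤ 2 := by
    have h1 : |x| ≤ ∑ j : Fin n, |b j * u j| := Finset.abs_sum_le_sum_abs _ _
    have h2 : ∀ j : Fin n, |b j * u j| ≤ |b j| * η ^ n := by
      intro j
      rw [abs_mul]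
      have hj : |u j| ≤ η ^ n := by
        refine (hu' j).trans ?_
        exact pow_le_pow_right₀ (le_of_lt hη1) (Nat.sub_le n j)
      exact mul_le_mul_of_nonneg_left hj (abs_nonneg _)
    have h3 : ∑ j : Fin n, |b j * u j| ≤ ∑ j : Fin n, |b j| * η ^ n :=
      Finset.sum_le_sum fun j _ => h2 j
    have h4 : ∑ j : Fin n, |b j| * η ^ n = η ^ n * S := by
      rw [← Finset.sum_mul, hSdef, ← Fin.sum_univ_eq_sum_range (fun j => |b j|) n]
      ring
    calc |x| ≤ ∑ j : Fin n, |b j| * η ^ n := le_trans h1 h3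
      _ = 2 := by rw [h4, hkey]
  set δ : ℝ := if 0 ≤ x then 1 else -1 with hδdef
  set u₀ : ℝ := δ - x with hu₀def
  have hxle : x ≤ 2 := le_trans (le_abs_self x) hxabs
  have hxge : -2 ≤ x := neg_le_of_abs_le hxabs
  have hu₀ : -η < u₀ ∧ u₀ < η := by
    rw [hu₀def, hδdef]
    split_ifs with h
    · constructor <;> linarith
    · push_neg at h
      constructor <;> linarith
  refine ⟨u₀, ⟨hu₀.1, hu₀.2⟩, δ, ?_, rfl, ?_⟩
  · rw [hδdef]; split_ifs <;> simp
  · intro i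
    simp only [Set.mem_setOf_eq]
    split_ifs with h
    · have hle : |u ⟨(i : ℕ) + 1, h⟩| ≤ η ^ (n - ((i : ℕ) + 1)) := hu' _
      have hlt : η ^ (n - ((i : ℕ) + 1)) < η ^ (n - (i : ℕ)) :=
        pow_lt_pow_right₀ hη1 (by omega)
      linarith
    · have hni : n - (i : ℕ) = 1 := by have := i.isLt; omega
      rw [hni, pow_one, abs_lt]
      exact hu₀
end

section
/- Fix n ≥ 1, λ ∈ (0,1), N = r+1 ≥ 1, and coefficients b₀,…,bₙ with b₀ ≠ 0, bₙ = 1, such that with P(x) = Σ b_j x^j one has P^{(i)}(1/λ) = 0 for 0 ≤ i ≤ N−1. Define B_k(x) = Σ_{j=0}^{k} b_j x^{k−j}, the linear map π : ℝⁿ → ℝ^N by π(u_{−n},…,u_{−1}) = (Σ_{k=0}^{n−1} u_{k−n} B_k^{(N−i)}(λ))_{1≤i≤N}, the affine maps F_δ(X) = JX + δT on ℝ^N (J the upper-triangular matrix with λ on the diagonal and superdiagonal entries N−1, N−2, …, 1; T = (0,…,0,1); δ ∈ {−1,+1}), and the linear automorphisms S_δ(u_{−n+1},…,u₀) = (u_{−n},…,u_{−1})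 where u_{−n} = (δ − Σ_{j=1}^{n} b_j u_{j−n})/b₀. Then π is a semi-conjugacy: F_δ ∘ π = π ∘ S_δ for δ ∈ {−1, +1}. -/
open Polynomial

/-- The partial polynomial `B_k(x) = Σ_{j=0}^{k} b_j x^{k−j}`. -/
noncomputable def Bpoly (b : ℕ → ℝ) (k : ℕ) : Polynomial ℝ :=
  ∑ j ∈ Finset.range (k + 1), C (b j) * X ^ (k - j)

/-- The upper bidiagonal matrix `J` with `λ` on the diagonal and
`N−1, N−2, …, 1` on the superdiagonal. -/
noncomputable def Jmat (N : ℕ) (lam : ℝ) : Matrix (Fin N) (Fin N) ℝ :=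
  Matrix.of fun i j =>
    if j = i then lam else if (j : ℕ) = (i : ℕ) + 1 then ((N : ℝ) - 1 - (i : ℕ)) else 0

/-- The vector `T = (0,…,0,1)`. -/
def Tvec (N : ℕ) : Fin N → ℝ := fun i => if (i : ℕ) = N - 1 then 1 else 0

/-- The affine map `F_δ(X) = JX + δT` on `ℝᴺ`. -/
noncomputable def Fmap (N : ℕ) (lam δ : ℝ) (x : Fin N → ℝ) : Fin N → ℝ :=
  (Jmat N lam).mulVec x + δ • Tvec N

/-- The projection `π(u_{−n},…,u_{−1}) = (Σ_{k<n} u_{k−n} B_k^{(N−i)}(λ))_{1 ≤ i ≤ N}`. -/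
noncomputable def piMap (n N : ℕ) (b : ℕ → ℝ) (lam : ℝ) (u : Fin n → ℝ) : Fin N → ℝ :=
  fun i => ∑ k : Fin n, u k * (derivative^[N - 1 - (i : ℕ)] (Bpoly b (k : ℕ))).eval lam

/-- The shift map `S_δ(u_{−n+1},…,u₀) = (u_{−n},…,u_{−1})` with
`u_{−n} = (δ − Σ_{j=1}^{n} b_j u_{j−n})/b₀`. -/
noncomputable def Smap (n : ℕ) (b : ℕ → ℝ) (δ : ℝ) (u : Fin n → ℝ) : Fin n → ℝ :=
  fun k =>
    if (k : ℕ) = 0 then (δ - ∑ j : Fin n, b ((j : ℕ) + 1) * u j) / b 0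
    else u ⟨(k : ℕ) - 1, Nat.lt_of_le_of_lt (Nat.sub_le _ _) k.isLt⟩

lemma iter_swap (p : ℝ[X]) (m : ℕ) :
    (derivative)^[m] (derivative p) = derivative ((derivative)^[m] p) := by
  rw [← Function.iterate_succ_apply, Function.iterate_succ_apply']

lemma iter_deriv_X_mul (p : ℝ[X]) (m : ℕ) :
    derivative^[m+1] (X * p) =
      X * derivative^[m+1] p + C ((m:ℝ)+1) * derivative^[m] p := by
  induction m generalizing p with
  | zero => simp [derivative_mul]; ring
  | succ m ih =>
    rw [Function.iterate_succ_apply', ih, Function.iterate_succ_apply',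
      Function.iterate_succ_apply']
    simp [derivative_mul, iter_swap]
    ring

lemma vanish_of_pow_dvd (c : ℝ) : ∀ (m N : ℕ) (R : ℝ[X]), m < N →
    (derivative^[m] ((X - C c)^N * R)).eval c = 0 := by
  intro m
  induction m with
  | zero =>
    intro N R hN
    obtain ⟨N', rfl⟩ : ∃ N', N = N' + 1 := ⟨N - 1, by omega⟩
    simp [pow_succ]
  | succ m ih =>
    intro N R hN
    obtain ⟨N', rfl⟩ : ∃ N', N = N' + 1 := ⟨N - 1, by omega⟩
    have hd : derivative ((X - C c)^(N'+1) * R) =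
        (X - C c)^N' * (C ((N':ℝ)+1) * R + (X - C c) * derivative R) := by
      rw [derivative_mul, derivative_pow]
      simp
      ring
    rw [Function.iterate_succ_apply, hd]
    exact ih N' _ (by omega)

lemma reflect_finset_sum {ι : Type*} (N : ℕ) (s : Finset ι) (f : ι → ℝ[X]) :
    reflect N (∑ j ∈ s, f j) = ∑ j ∈ s, reflect N (f j) := by
  classical
  induction s using Finset.induction with
  | empty => simp [reflect_zero]
  | insert _ _ h ih => simp [Finset.sum_insert h, reflect_add, ih]

lemma Bpoly_eq_reflect (b : ℕ → ℝ) (n : ℕ) :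
    Bpoly b n = reflect n (∑ j ∈ Finset.range (n + 1), C (b j) * X ^ j) := by
  rw [reflect_finset_sum, Bpoly]
  refine Finset.sum_congr rfl fun j hj => ?_
  rw [reflect_C_mul_X_pow, revAt_le (by simp at hj; omega)]

lemma reflect_pow_linear (c : ℝ) : ∀ k, reflect k ((X - C c)^k) = (1 - C c * X)^k := by
  intro k
  induction k with
  | zero => simp
  | succ k ih =>
    rw [pow_succ,
      reflect_mul _ _ (by simpa [natDegree_X_sub_C] using natDegree_pow_le (p := X - C c) (n := k)) (le_of_eq (natDegree_X_sub_C c)), ih]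
    rw [pow_succ]
    congr 1
    rw [reflect_sub, reflect_C, show reflect 1 (X : ℝ[X]) = X ^ revAt 1 1 from by
        simpa using reflect_monomial 1 1 (R := ℝ)]
    simp [revAt_le]

lemma Bn_root (n N : ℕ) (lam : ℝ) (hlam0 : lam ≠ 0) (b : ℕ → ℝ) (hbn : b n = 1)
    (hP : ∀ i < N, (derivative^[i] (∑ j ∈ Finset.range (n+1), C (b j) * X^j)).eval (1/lam) = 0) :
    ∀ m < N, (derivative^[m] (Bpoly b n)).eval lam = 0 := by
  intro m hm
  have hN : 1 ≤ N := by omega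
  set c : ℝ := 1 / lam with hc
  set P : ℝ[X] := ∑ j ∈ Finset.range (n+1), C (b j) * X^j with hPdef
  have hcoeff : P.coeff n = 1 := by
    simp [hPdef, finset_sum_coeff, coeff_C_mul, coeff_X_pow, Finset.sum_ite_eq', hbn]
  have hPne : P ≠ 0 := fun h => by simp [h] at hcoeff
  have hdeg : P.natDegree = n := by
    refine le_antisymm (natDegree_sum_le_of_forall_le _ _ fun j hj => ?_)
      (le_natDegree_of_ne_zero (by rw [hcoeff]; norm_num))
    refine (natDegree_C_mul_le _ _).trans ?_
    simp only [natDegree_X_pow]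
    simp at hj; omega
  have hroot : N - 1 < P.rootMultiplicity c := by
    rw [lt_rootMultiplicity_iff_isRoot_iterate_derivative hPne]
    exact fun m' hm' => hP m' (by omega)
  have hdvd : (X - C c)^N ∣ P :=
    dvd_trans (pow_dvd_pow _ (by omega : N ≤ P.rootMultiplicity c))
      (pow_rootMultiplicity_dvd P c)
  obtain ⟨Q, hQ⟩ := hdvd
  have hQne : Q ≠ 0 := by rintro rfl; rw [mul_zero] at hQ; exact hPne hQ
  have hNn : N ≤ n := by
    have := natDegree_le_of_dvd ⟨Q, hQ⟩ hPne
    rwa [natDegree_pow, natDegree_X_sub_C, mul_one, hdeg] at this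
  have hQdeg : Q.natDegree ≤ n - N := by
    have h2 := hQ ▸ hdeg
    rw [natDegree_mul (pow_ne_zero _ (X_sub_C_ne_zero c)) hQne,
      natDegree_pow, natDegree_X_sub_C, mul_one] at h2
    omega
  have hlin : (1 : ℝ[X]) - C c * X = C (-c) * (X - C lam) := by
    have h1 : -c * lam = -1 := by rw [hc]; field_simp
    rw [mul_sub, ← C_mul, h1]
    simp [map_neg]
    ring
  have hn' : N + (n - N) = n := by omega
  have hsplit : reflect n P = reflect N ((X - C c)^N) * reflect (n - N) Q := by
    conv_lhs => rw [hQ, ← hn']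
    exact reflect_mul _ _
      (by simpa [natDegree_X_sub_C] using natDegree_pow_le (p := X - C c) (n := N)) hQdeg
  have key : Bpoly b n = (X - C lam)^N * ((C (-c))^N * reflect (n - N) Q) := by
    rw [Bpoly_eq_reflect, ← hPdef, hsplit, reflect_pow_linear, hlin, mul_pow]
    ring
  rw [key]
  exact vanish_of_pow_dvd lam m N _ hm

lemma Bpoly_succ (b : ℕ → ℝ) (k : ℕ) :
    Bpoly b (k+1) = X * Bpoly b k + C (b (k+1)) := by
  rw [Bpoly, Bpoly, Finset.sum_range_succ, Finset.mul_sum]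
  congr 1
  · refine Finset.sum_congr rfl fun j hj => ?_
    simp only [Finset.mem_range] at hj
    rw [show k + 1 - j = (k - j) + 1 by omega, pow_succ]
    ring
  · simp

lemma E_succ (b : ℕ → ℝ) (lam : ℝ) (k m : ℕ) :
    (derivative^[m+1] (Bpoly b (k+1))).eval lam =
      lam * (derivative^[m+1] (Bpoly b k)).eval lam
        + ((m:ℝ)+1) * (derivative^[m] (Bpoly b k)).eval lam := by
  rw [Bpoly_succ]
  simp [iterate_derivative_C (Nat.succ_pos m), iter_deriv_X_mul]

lemma E0_succ (b : ℕ → ℝ) (lam : ℝ) (k : ℕ) :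
    (Bpoly b (k+1)).eval lam = lam * (Bpoly b k).eval lam + b (k+1) := by
  rw [Bpoly_succ]; simp [mul_comm]

lemma E_zero_poly (b : ℕ → ℝ) (lam : ℝ) (m : ℕ) (hm : 0 < m) :
    (derivative^[m] (Bpoly b 0)).eval lam = 0 := by
  have : Bpoly b 0 = C (b 0) := by simp [Bpoly]
  rw [this, iterate_derivative_C hm]; simp

lemma Jmat_mulVec (N : ℕ) (lam : ℝ) (x : Fin N → ℝ) (i : Fin N) :
    (Jmat N lam).mulVec x i =
      lam * x i +
        ((N:ℝ) - 1 - (i:ℕ)) * (∑ j : Fin N, if (j:ℕ) = (i:ℕ)+1 then x j else 0) := by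
  have h : ∀ j : Fin N,
      (Jmat N lam) i j * x j
        = (if j = i then lam * x j else 0)
          + ((N:ℝ) - 1 - (i:ℕ)) * (if (j:ℕ) = (i:ℕ)+1 then x j else 0) := by
    intro j
    simp only [Jmat, Matrix.of_apply]
    by_cases h1 : j = i
    · subst h1; rw [if_pos rfl, if_pos rfl, if_neg (by omega), mul_zero, add_zero]
    · rw [if_neg h1, if_neg h1]
      by_cases h2 : (j:ℕ) = (i:ℕ)+1
      · rw [if_pos h2, if_pos h2, zero_add]
      · rw [if_neg h2, if_neg h2, mul_zero, zero_mul, add_zero]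
  show (∑ j, Jmat N lam i j * x j) = _
  rw [Finset.sum_congr rfl fun j _ => h j, Finset.sum_add_distrib,
    Finset.sum_ite_eq' Finset.univ i (fun j => lam * x j), ← Finset.mul_sum]
  simp

/-- `π` is a semi-conjugacy: `F_δ ∘ π = π ∘ S_δ` for `δ ∈ {−1, +1}`. -/
theorem stmt_8 (n N : ℕ) (hn : 1 ≤ n) (hN : 1 ≤ N)
    (lam : ℝ) (hlam : lam ∈ Set.Ioo (0 : ℝ) 1)
    (b : ℕ → ℝ) (hb0 : b 0 ≠ 0) (hbn : b n = 1)
    (hP : ∀ i < N,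
      (derivative^[i] (∑ j ∈ Finset.range (n + 1), C (b j) * X ^ j)).eval (1 / lam) = 0) :
    ∀ δ ∈ ({-1, 1} : Set ℝ), ∀ u : Fin n → ℝ,
      Fmap N lam δ (piMap n N b lam u) = piMap n N b lam (Smap n b δ u) := by

  obtain ⟨n', rfl⟩ : ∃ n', n = n' + 1 := ⟨n - 1, by omega⟩
  have hlam0 : lam ≠ 0 := ne_of_gt hlam.1
  have hBn := Bn_root (n'+1) N lam hlam0 b hbn hP
  intro δ hδ u
  funext i
  simp only [Fmap, Pi.add_apply, Pi.smul_apply, smul_eq_mul, Jmat_mulVec]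
  by_cases hi : (i:ℕ) + 1 < N
  · -- interior rows
    have hiNe : ¬ ((i:ℕ) = N - 1) := by omega
    rw [show Tvec N i = 0 from by simp [Tvec, hiNe]]
    have hiff : ∀ j : Fin N, ((j:ℕ) = (i:ℕ)+1) ↔ (j = (⟨(i:ℕ)+1, hi⟩ : Fin N)) := by
      intro j; simp [Fin.ext_iff]
    have hsum : (∑ j : Fin N, if (j:ℕ) = (i:ℕ)+1 then piMap (n'+1) N b lam u j else 0)
        = piMap (n'+1) N b lam u (⟨(i:ℕ)+1, hi⟩ : Fin N) := by
      simp only [hiff]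
      rw [Finset.sum_ite_eq' Finset.univ _ (fun j => piMap (n'+1) N b lam u j)]
      simp
    rw [hsum]
    set m' : ℕ := N - 1 - ((i:ℕ)+1) with hm'
    have hmi : N - 1 - (i:ℕ) = m' + 1 := by omega
    have hNcast : (N:ℝ) - 1 - (i:ℕ) = (m':ℝ) + 1 := by
      have h1 : ((N - 1 - (i:ℕ) : ℕ):ℝ) = (m':ℝ) + 1 := by exact_mod_cast congrArg Nat.cast hmi
      rw [Nat.cast_sub (by omega : (i:ℕ) ≤ N - 1), Nat.cast_sub hN] at h1
      simpa using h1
    simp only [piMap, hmi, hNcast]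
    have hmi' : N - 1 - ((⟨(i:ℕ)+1, hi⟩ : Fin N) : ℕ) = m' := by simp [hm']
    rw [hmi']
    rw [Finset.mul_sum, Finset.mul_sum, ← Finset.sum_add_distrib]
    have hL : ∀ k : Fin (n'+1),
        lam * (u k * (derivative^[m'+1] (Bpoly b (k:ℕ))).eval lam)
          + ((m':ℝ)+1) * (u k * (derivative^[m'] (Bpoly b (k:ℕ))).eval lam)
        = u k * (derivative^[m'+1] (Bpoly b ((k:ℕ)+1))).eval lam := by
      intro k; rw [E_succ]; ring
    rw [Finset.sum_congr rfl fun k _ => hL k, mul_zero, add_zero]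
    conv_rhs => rw [Fin.sum_univ_succ]
    have hS0 : Smap (n'+1) b δ u 0
        * (derivative^[m'+1] (Bpoly b ((0 : Fin (n'+1)):ℕ))).eval lam = 0 := by
      rw [Fin.val_zero, E_zero_poly b lam (m'+1) (Nat.succ_pos m'), mul_zero]
    rw [hS0, zero_add]
    have hrw : (∑ k : Fin (n'+1), u k * (derivative^[m'+1] (Bpoly b ((k:ℕ)+1))).eval lam)
        = (∑ k : Fin n', u k.castSucc * (derivative^[m'+1] (Bpoly b ((k:ℕ)+1))).eval lam)
          + u (Fin.last n') * (derivative^[m'+1] (Bpoly b (n'+1))).eval lam := by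
      rw [Fin.sum_univ_castSucc]
      simp
    rw [hrw, hBn (m'+1) (by omega), mul_zero, add_zero]
    refine Finset.sum_congr rfl fun k _ => ?_
    have hSk : Smap (n'+1) b δ u k.succ = u k.castSucc := by
      simp only [Smap, Fin.val_succ]
      rw [if_neg (by omega)]
      congr 1
    rw [hSk, Fin.val_succ]
  · -- last row
    have hieq : (i:ℕ) = N - 1 := by have := i.isLt; omega
    rw [show Tvec N i = 1 from by simp [Tvec, hieq]]
    have hzero : (∑ j : Fin N, if (j:ℕ) = (i:ℕ)+1 then piMap (n'+1) N b lam u j else 0) = 0 :=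
      Finset.sum_eq_zero fun j _ => by rw [if_neg (by have := j.isLt; omega)]
    rw [hzero, mul_zero, add_zero, mul_one]
    have hm0 : N - 1 - (i:ℕ) = 0 := by omega
    simp only [piMap, hm0, Function.iterate_zero, id_eq]
    conv_rhs => rw [Fin.sum_univ_succ]
    have hB0 : (Bpoly b ((0 : Fin (n'+1)):ℕ)).eval lam = b 0 := by
      simp [Bpoly]
    have hS0 : Smap (n'+1) b δ u 0 = (δ - ∑ j : Fin (n'+1), b ((j:ℕ)+1) * u j) / b 0 := by
      simp [Smap]
    rw [hB0, hS0, div_mul_cancel₀ _ hb0]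
    have hrw : (∑ k : Fin n', Smap (n'+1) b δ u k.succ * (Bpoly b ((k.succ:Fin (n'+1)):ℕ)).eval lam)
        = ∑ k : Fin n', (lam * (u k.castSucc * (Bpoly b (k:ℕ)).eval lam)
            + b ((k:ℕ)+1) * u k.castSucc) := by
      refine Finset.sum_congr rfl fun k _ => ?_
      have hSk : Smap (n'+1) b δ u k.succ = u k.castSucc := by
        simp only [Smap, Fin.val_succ]
        rw [if_neg (by omega)]
        congr 1
      rw [hSk, Fin.val_succ, E0_succ]
      ring
    rw [hrw, Finset.sum_add_distrib]
    rw [show (∑ k : Fin (n'+1), u k * (Bpoly b (k:ℕ)).eval lam)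
        = (∑ k : Fin n', u k.castSucc * (Bpoly b (k:ℕ)).eval lam)
          + u (Fin.last n') * (Bpoly b n').eval lam from by
      rw [Fin.sum_univ_castSucc]; simp]
    rw [show (∑ j : Fin (n'+1), b ((j:ℕ)+1) * u j)
        = (∑ k : Fin n', b ((k:ℕ)+1) * u k.castSucc)
          + b (n'+1) * u (Fin.last n') from by
      rw [Fin.sum_univ_castSucc]; simp]
    have hkey : lam * (Bpoly b n').eval lam + b (n'+1) = 0 := by
      rw [← E0_succ]; exact hBn 0 (by omega)
    rw [← Finset.mul_sum]
    linear_combination (u (Fin.last n')) * hkey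
end

section
/- Let λ ∈ (1/2, 1), and consider the map f on ([−2,−1] ∪ [1,2]) × ℝ given by f(x,y) = (4|x| − 6, λy + sgn(x)). For η > 0 small enough, setting Δ_η := ([−2−η, −1+η] ∪ [1−η, 2+η]) × [−2, 2], one has f(Interior(Δ_η)) ⊇ [−2−η, 2+η] × [−2, 2]. Consequently every point of [−2,2] × [−2,2] admits an infinite backward orbit under f contained in Δ_η. -/
/-- The blender map `f(x,y) = (4|x| − 6, λy + sgn(x))`. -/
noncomputable def blenderMap (lam : ℝ) : ℝ × ℝ → ℝ × ℝ :=
  fun p => (4 * |p.1| - 6, lam * p.2 + Real.sign p.1)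

/-- For `λ ∈ (1/2,1)` and `η > 0` small enough, with
`Δ_η = ([−2−η,−1+η] ∪ [1−η,2+η]) × [−2,2]`, one has
`f(Interior Δ_η) ⊇ [−2−η,2+η] × [−2,2]`; consequently every point of `[−2,2]²`
admits an infinite backward orbit under `f` contained in `Δ_η`. -/
theorem stmt_15 (lam : ℝ) (hlam : lam ∈ Set.Ioo (1/2 : ℝ) 1) :
    ∃ η₀ > (0 : ℝ), ∀ η ∈ Set.Ioo (0 : ℝ) η₀,
      (Set.Icc (-2 - η) (2 + η) ×ˢ Set.Icc (-2 : ℝ) 2 ⊆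
        blenderMap lam ''
          interior ((Set.Icc (-2 - η) (-1 + η) ∪ Set.Icc (1 - η) (2 + η)) ×ˢ
            Set.Icc (-2 : ℝ) 2)) ∧
      ∀ p ∈ Set.Icc (-2 : ℝ) 2 ×ˢ Set.Icc (-2 : ℝ) 2,
        ∃ z : ℕ → ℝ × ℝ, z 0 = p ∧
          ∀ k, z (k + 1) ∈ (Set.Icc (-2 - η) (-1 + η) ∪ Set.Icc (1 - η) (2 + η)) ×ˢ
              Set.Icc (-2 : ℝ) 2 ∧
            blenderMap lam (z (k + 1)) = z k := by
  obtain ⟨h1, h2⟩ := hlam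
  have hlam0 : (0 : ℝ) < lam := by linarith
  refine ⟨1, one_pos, fun η hη => ?_⟩
  obtain ⟨hη0, hη1⟩ := hη
  set g : ℝ × ℝ → ℝ × ℝ := fun p =>
    if 0 ≤ p.2 then ((p.1 + 6) / 4, (p.2 - 1) / lam)
    else (-((p.1 + 6) / 4), (p.2 + 1) / lam) with hg
  -- the key step: preimages exist inside the open core of Δ_η
  have key : ∀ p ∈ Set.Icc (-2 - η) (2 + η) ×ˢ Set.Icc (-2 : ℝ) 2,
      g p ∈ (Set.Ioo (-2 - η) (-1 + η) ∪ Set.Ioo (1 - η) (2 + η)) ×ˢ Set.Ioo (-2 : ℝ) 2 ∧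
      blenderMap lam (g p) = p := by
    rintro ⟨a, b⟩ ⟨⟨ha1, ha2⟩, hb1, hb2⟩
    by_cases hb : 0 ≤ b
    · have hgp : g (a, b) = ((a + 6) / 4, (b - 1) / lam) := by simp [hg, hb]
      have hx0 : (0 : ℝ) < (a + 6) / 4 := by linarith
      refine ⟨?_, ?_⟩
      · rw [hgp]
        refine ⟨Or.inr ⟨by linarith, by linarith⟩, ?_, ?_⟩
        · rw [lt_div_iff₀ hlam0]; nlinarith
        · rw [div_lt_iff₀ hlam0]; nlinarith
      · rw [hgp]
        simp only [blenderMap]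
        rw [Real.sign_of_pos hx0, abs_of_pos hx0, mul_div_cancel₀ _ (ne_of_gt hlam0)]
        ext <;> simp <;> ring
    · have hgp : g (a, b) = (-((a + 6) / 4), (b + 1) / lam) := by simp [hg, hb]
      have hx0 : -((a + 6) / 4) < 0 := by linarith
      refine ⟨?_, ?_⟩
      · rw [hgp]
        refine ⟨Or.inl ⟨by linarith, by linarith⟩, ?_, ?_⟩
        · rw [lt_div_iff₀ hlam0]; nlinarith
        · rw [div_lt_iff₀ hlam0]; nlinarith
      · rw [hgp]
        simp only [blenderMap]
        rw [Real.sign_of_neg hx0, abs_of_neg hx0, mul_div_cancel₀ _ (ne_of_gt hlam0)]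
        ext <;> simp <;> ring
  -- the open core is contained in the interior of Δ_η
  have hopen : (Set.Ioo (-2 - η) (-1 + η) ∪ Set.Ioo (1 - η) (2 + η)) ×ˢ Set.Ioo (-2 : ℝ) 2 ⊆
      interior ((Set.Icc (-2 - η) (-1 + η) ∪ Set.Icc (1 - η) (2 + η)) ×ˢ Set.Icc (-2 : ℝ) 2) :=
    interior_maximal
      (Set.prod_mono (Set.union_subset_union Set.Ioo_subset_Icc_self Set.Ioo_subset_Icc_self)
        Set.Ioo_subset_Icc_self)
      ((isOpen_Ioo.union isOpen_Ioo).prod isOpen_Ioo)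
  -- the open core is contained in the big box
  have hback : (Set.Ioo (-2 - η) (-1 + η) ∪ Set.Ioo (1 - η) (2 + η)) ×ˢ Set.Ioo (-2 : ℝ) 2 ⊆
      Set.Icc (-2 - η) (2 + η) ×ˢ Set.Icc (-2 : ℝ) 2 := by
    rintro ⟨x, y⟩ ⟨hx, hy1, hy2⟩
    refine ⟨?_, by constructor <;> linarith⟩
    rcases hx with ⟨hx1, hx2⟩ | ⟨hx1, hx2⟩ <;> constructor <;> linarith
  constructor
  · intro q hq
    exact ⟨g q, hopen (key q hq).1, (key q hq).2⟩
  · intro p hp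
    have hp' : p ∈ Set.Icc (-2 - η) (2 + η) ×ˢ Set.Icc (-2 : ℝ) 2 := by
      obtain ⟨⟨h3, h4⟩, h5⟩ := hp
      exact ⟨⟨by linarith, by linarith⟩, h5⟩
    refine ⟨fun k => g^[k] p, rfl, fun k => ?_⟩
    have hin : ∀ n, g^[n] p ∈ Set.Icc (-2 - η) (2 + η) ×ˢ Set.Icc (-2 : ℝ) 2 := by
      intro n
      induction n with
      | zero => exact hp'
      | succ n ih =>
        rw [Function.iterate_succ_apply']
        exact hback (key _ ih).1
    simp only [Function.iterate_succ_apply']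
    refine ⟨?_, (key _ (hin k)).2⟩
    exact Set.prod_mono
      (Set.union_subset_union Set.Ioo_subset_Icc_self Set.Ioo_subset_Icc_self)
      Set.Ioo_subset_Icc_self (key _ (hin k)).1
end

section
/- Suppose F₊, F₋ are continuous injective maps of ℝ^m with open sets W₊, W₋ and W := W₊ ∪ W₋, where F_δ^{−1} denotes the inverse branch defined on W_δ, and suppose Closure(F₊^{-1}(W₊)) ∪ Closure(F₋^{-1}(W₋)) ⊆ W₊ ∪ W₋. Then for every point w ∈ W there exist a sequence (δ_i)_{i≤0} ∈ {+,−}^{ℤ⁻} and points (w_i)_{i≤0} with w₀ = w, w_i ∈ W_{δ_i}, and w_i = F_{δ_i}(w_{i−1}) for all i ≤ 0. -/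
/-- Inductive backward-orbit construction: if `F₊, F₋` are continuous injective maps of
`ℝᵐ`, `W₊, W₋` are open sets contained in the ranges of the respective inverse branches,
and `Closure(F₊⁻¹(W₊)) ∪ Closure(F₋⁻¹(W₋)) ⊆ W₊ ∪ W₋`, then every `w ∈ W₊ ∪ W₋` admits
an infinite backward itinerary `(δ_i, w_i)` with `w₀ = w`, `w_i ∈ W_{δ_i}` and
`w_i = F_{δ_i}(w_{i−1})`. -/
theorem stmt_19 {m : ℕ} (Fp Fm : (Fin m → ℝ) → (Fin m → ℝ))
    (hFpc : Continuous Fp) (hFmc : Continuous Fm)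
    (hFpi : Function.Injective Fp) (hFmi : Function.Injective Fm)
    (Wp Wm : Set (Fin m → ℝ)) (hWp : IsOpen Wp) (hWm : IsOpen Wm)
    (hrp : Wp ⊆ Set.range Fp) (hrm : Wm ⊆ Set.range Fm)
    (hcov : closure (Fp ⁻¹' Wp) ∪ closure (Fm ⁻¹' Wm) ⊆ Wp ∪ Wm) :
    ∀ w ∈ Wp ∪ Wm, ∃ (ds : ℕ → Bool) (ws : ℕ → Fin m → ℝ), ws 0 = w ∧
      ∀ i, ws i ∈ (if ds i then Wp else Wm) ∧
        (if ds i then Fp else Fm) (ws (i + 1)) = ws i := by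
  intro w hw
  -- key step: from any point in the union, pick a branch and a preimage in the union
  have key : ∀ s : {x // x ∈ Wp ∪ Wm}, ∃ (d : Bool) (t : {x // x ∈ Wp ∪ Wm}),
      s.1 ∈ (if d then Wp else Wm) ∧ (if d then Fp else Fm) t.1 = s.1 := by
    rintro ⟨s, hs | hs⟩
    · obtain ⟨x, hx⟩ := hrp hs
      have hxU : x ∈ Wp ∪ Wm := hcov (Or.inl (subset_closure (by simp [hx, hs])))
      exact ⟨true, ⟨x, hxU⟩, by simpa using hs, by simpa using hx⟩
    · obtain ⟨x, hx⟩ := hrm hs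
      have hxU : x ∈ Wp ∪ Wm := hcov (Or.inr (subset_closure (by simp [hx, hs])))
      exact ⟨false, ⟨x, hxU⟩, by simpa using hs, by simpa using hx⟩
  classical
  choose d t hmem heq using key
  let W : ℕ → {x // x ∈ Wp ∪ Wm} := fun n => t^[n] ⟨w, hw⟩
  refine ⟨fun n => d (W n), fun n => (W n).1, rfl, fun i => ?_⟩
  have hW : W (i + 1) = t (W i) := Function.iterate_succ_apply' t i ⟨w, hw⟩
  exact ⟨hmem (W i), by show (if d (W i) then Fp else Fm) (W (i+1)).1 = (W i).1; rw [hW]; exact heq (W i)⟩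
end
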